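/- arXiv:1201.3377 — 3 statements merged into one kernel-verified Lean document; each statement's English description precedes it below -/
import Mathlib

section
/- For a quasi-graded poset (P,ρ,ζ̄) with 0̂ and 1̂, the ab-index satisfies the recursion Ψ([x,z]) = ζ̄(x,z)·(a−b)^{ρ(x,z)−1} + ∑_{x<y<z} Ψ([x,y])·b·ζ̄(y,z)·(a−b)^{ρ(y,z)−1}, for all x < z. -/
open scoped Classical
open Finset

noncomputable section

/-- The free noncommutative algebra `ℚ⟨a,b⟩`. -/
abbrev QA : Type := FreeAlgebra ℚ Bool

/-- The variable `a`. -/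
def av : QA := FreeAlgebra.ι ℚ true

/-- The variable `b`. -/
def bv : QA := FreeAlgebra.ι ℚ false

/-- `c = a + b`. -/
def cvar : QA := av + bv

/-- `d = ab + ba`. -/
def dvar : QA := av * bv + bv * av

variable {α : Type*}

/-- The `ζ̄`-weight of a chain encoded as `f : Fin (k+1) → α`:
the product of the values of `ζ̄` on consecutive elements. -/
def chainZeta (ζ : α → α → ℚ) {k : ℕ} (f : Fin (k + 1) → α) : ℚ :=
  (List.ofFn (fun i : Fin k => ζ (f i.castSucc) (f i.succ))).prod

/-- The `ab`-weight of a chain: `(a-b)^{g₁-1} · b · (a-b)^{g₂-1} · b ⋯ b · (a-b)^{g_k-1}`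
where `gᵢ` are the successive rank gaps along the chain. -/
def chainWt (ρ : α → ℕ) {k : ℕ} (f : Fin (k + 1) → α) : QA :=
  (List.ofFn (fun i : Fin k =>
    (if (i : ℕ) = 0 then 1 else bv) *
      (av - bv) ^ (ρ (f i.succ) - ρ (f i.castSucc) - 1))).prod

/-- `f` encodes a (strict) chain from `x` to `z`. -/
def IsChainFrom [PartialOrder α] {k : ℕ} (f : Fin (k + 1) → α) (x z : α) : Prop :=
  StrictMono f ∧ f 0 = x ∧ f (Fin.last k) = z

/-- The ab-index `Ψ` of the interval `[x,z]` of a quasi-graded poset: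
the sum over all chains from `x` to `z` of `ζ̄(c) · wt(c)`. -/
def abIndex [PartialOrder α] [Fintype α] (ρ : α → ℕ) (ζ : α → α → ℚ) (x z : α) : QA :=
  ∑ k ∈ Finset.range (Fintype.card α), ∑ f : Fin (k + 1) → α,
    if IsChainFrom f x z then chainZeta ζ f • chainWt ρ f else 0

/-- `(P,ρ,ζ̄)` is a quasi-graded poset: `ρ` is strictly order-preserving and `ζ̄`
is an element of the incidence algebra with `ζ̄(x,x) = 1`. -/
def IsQuasiGraded [PartialOrder α] (ρ : α → ℕ) (ζ : α → α → ℚ) : Prop :=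
  StrictMono ρ ∧ (∀ x, ζ x x = 1) ∧ ∀ x y : α, ¬ x ≤ y → ζ x y = 0

/-- Convolution in the incidence algebra. -/
def iaMul [PartialOrder α] [Fintype α] (f g : α → α → ℚ) : α → α → ℚ :=
  fun x z => ∑ y ∈ Finset.univ.filter (fun y => x ≤ y ∧ y ≤ z), f x y * g y z

/-- The identity `δ` of the incidence algebra. -/
def iaDelta : α → α → ℚ := fun x z => if x = z then 1 else 0

/-- The Eulerian condition on the interval `[x,z]`:
`∑_{x ≤ y ≤ z} (-1)^{ρ(y)-ρ(x)} ζ̄(x,y) ζ̄(y,z) = δ_{x,z}`. -/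
def EulerianAt [PartialOrder α] [Fintype α] (ρ : α → ℕ) (ζ : α → α → ℚ) (x z : α) : Prop :=
  (∑ y ∈ Finset.univ.filter (fun y => x ≤ y ∧ y ≤ z),
    (-1 : ℚ) ^ (ρ y - ρ x) * ζ x y * ζ y z) = iaDelta x z

/-- `(P,ρ,ζ̄)` is Eulerian. -/
def IsEulerian [PartialOrder α] [Fintype α] (ρ : α → ℕ) (ζ : α → α → ℚ) : Prop :=
  ∀ x z : α, x ≤ z → EulerianAt ρ ζ x z

/-- The flag `f̄`-vector: `f̄_S = ∑_c ζ̄(c)` over chains from `x` to `z`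
whose interior elements have ranks exactly `S`. -/
def flagF [PartialOrder α] [Fintype α] (ρ : α → ℕ) (ζ : α → α → ℚ)
    (x z : α) (S : Finset ℕ) : ℚ :=
  ∑ k ∈ Finset.range (Fintype.card α), ∑ f : Fin (k + 1) → α,
    if IsChainFrom f x z ∧
        (Finset.univ.filter (fun i : Fin (k + 1) => i ≠ 0 ∧ i ≠ Fin.last k)).image
          (fun i => ρ (f i)) = S
      then chainZeta ζ f else 0

/-- The flag `h̄`-vector: `h̄_S = ∑_{T ⊆ S} (-1)^{|S-T|} f̄_T`. -/
def flagH [PartialOrder α] [Fintype α] (ρ : α → ℕ) (ζ : α → α → ℚ)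
    (x z : α) (S : Finset ℕ) : ℚ :=
  ∑ T ∈ S.powerset, (-1 : ℚ) ^ (S.card - T.card) * flagF ρ ζ x z T

/-- Chains with respect to an explicit strict relation `lt`. -/
def IsChainFromRel (lt : α → α → Prop) {k : ℕ} (f : Fin (k + 1) → α) (x z : α) : Prop :=
  (∀ i j : Fin (k + 1), i < j → lt (f i) (f j)) ∧ f 0 = x ∧ f (Fin.last k) = z

/-- The ab-index with respect to an explicit strict order relation `lt`. -/
def abIndexRel [Fintype α] (lt : α → α → Prop) (ρ : α → ℕ) (ζ : α → α → ℚ)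
    (x z : α) : QA :=
  ∑ k ∈ Finset.range (Fintype.card α), ∑ f : Fin (k + 1) → α,
    if IsChainFromRel lt f x z then chainZeta ζ f • chainWt ρ f else 0

/-- The Eulerian condition with respect to an explicit order relation `le`. -/
def IsEulerianRel [Fintype α] (le : α → α → Prop) (ρ : α → ℕ) (ζ : α → α → ℚ) : Prop :=
  ∀ x z : α, le x z →
    (∑ y ∈ Finset.univ.filter (fun y => le x y ∧ le y z),
      (-1 : ℚ) ^ (ρ y - ρ x) * ζ x y * ζ y z) = (if x = z then (1 : ℚ) else 0)

/-- Carrier of the zipped poset: remove `x` and `y`; the element `z` plays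
the role of the new element `w`. -/
abbrev ZipCarrier (α : Type*) (x y : α) : Type _ := {u : α // u ≠ x ∧ u ≠ y}

/-- The strict order of the zipped poset: `u <_Q w` iff `u < x` or `u < y`,
`w <_Q v` iff `x < v`, and otherwise the order is inherited from `P`. -/
def zipLt [PartialOrder α] (x y z : α) : ZipCarrier α x y → ZipCarrier α x y → Prop :=
  fun u v =>
    if u.1 = z then v.1 ≠ z ∧ x < v.1
    else if v.1 = z then u.1 < x ∨ u.1 < y
    else u.1 < v.1

/-- The (non-strict) order of the zipped poset. -/
def zipLe [PartialOrder α] (x y z : α) : ZipCarrier α x y → ZipCarrier α x y → Prop :=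
  fun u v => zipLt x y z u v ∨ u = v

/-- The rank function of the zipped poset: `ρ_Q(w) = ρ(x)`, otherwise inherited. -/
def zipRank [PartialOrder α] (ρ : α → ℕ) (x y z : α) : ZipCarrier α x y → ℕ :=
  fun u => if u.1 = z then ρ x else ρ u.1

/-- The weighted zeta function of the zipped poset:
`ζ̄_Q(w,v) = ζ̄(x,v)`, `ζ̄_Q(u,w) = ζ̄(u,x) + ζ̄(u,y) - ζ̄(u,z)`, otherwise inherited. -/
def zipZeta [PartialOrder α] (ζ : α → α → ℚ) (x y z : α) :
    ZipCarrier α x y → ZipCarrier α x y → ℚ :=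
  fun u v =>
    if v.1 = z then (if u.1 = z then 1 else ζ u.1 x + ζ u.1 y - ζ u.1 z)
    else if u.1 = z then ζ x v.1
    else ζ u.1 v.1

/-!
Deleting the top element `z` from a chain `x = x₀ < ⋯ < x_k = z` leaves a chain `c'` from `x`
to `y = x_{k-1} < z`, and both weights factor along this: `ζ̄(c) = ζ̄(c') ζ̄(y,z)` and
`wt(c) = wt(c') · b · (a-b)^{ρ(y,z)-1}`, except when `c'` is the one-element chain `y = x`,
which contributes no `b`; that case is the first term of the recursion.
-/

lemma sum_filter_lt_eq_add_sum_Ioo {M : Type*} [AddCommMonoid M] [PartialOrder α] [Fintype α]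
    {x z : α} (hxz : x < z) (f : α → M) (hf : ∀ y, ¬ x ≤ y → f y = 0) :
    ∑ y ∈ univ.filter (· < z), f y = f x + ∑ y ∈ univ.filter (fun y => x < y ∧ y < z), f y := by
  rw [← sum_insert (f := f) (by simp)]
  refine (sum_subset ?_ fun y hyz hy => hf y fun hxy => hy ?_).symm
  · intro y hy
    simp only [mem_insert, mem_filter, mem_univ, true_and] at hy ⊢
    rcases hy with rfl | ⟨-, hyz⟩
    exacts [hxz, hyz]
  · simp only [mem_insert, mem_filter, mem_univ, true_and] at hyz ⊢
    exact hxy.eq_or_lt.imp Eq.symm fun hxy => ⟨hxy, hyz⟩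

section Snoc

variable {k : ℕ}

lemma chainZeta_snoc (ζ : α → α → ℚ) (f : Fin (k + 1) → α) (a : α) :
    chainZeta ζ (Fin.snoc f a : Fin (k + 2) → α) = chainZeta ζ f * ζ (f (Fin.last k)) a := by
  rw [chainZeta, List.ofFn_succ', List.prod_concat]
  simp [chainZeta, Fin.succ_last, -Fin.castSucc_succ, Fin.succ_castSucc]

lemma chainWt_snoc (ρ : α → ℕ) (f : Fin (k + 1) → α) (a : α) :
    chainWt ρ (Fin.snoc f a : Fin (k + 2) → α) =
      chainWt ρ f * ((if k = 0 then 1 else bv) * (av - bv) ^ (ρ a - ρ (f (Fin.last k)) - 1)) := by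
  rw [chainWt, List.ofFn_succ', List.prod_concat]
  simp [chainWt, Fin.succ_last, -Fin.castSucc_succ, Fin.succ_castSucc]

lemma strictMono_snoc_iff [Preorder α] (f : Fin (k + 1) → α) (a : α) :
    StrictMono (Fin.snoc f a : Fin (k + 2) → α) ↔ StrictMono f ∧ f (Fin.last k) < a := by
  simp only [Fin.strictMono_iff_lt_succ, Fin.forall_fin_succ', Fin.succ_last, Fin.snoc_last,
    Fin.snoc_castSucc, Fin.succ_castSucc]

lemma isChainFrom_snoc_iff [PartialOrder α] (f : Fin (k + 1) → α) (a x z : α) :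
    IsChainFrom (Fin.snoc f a : Fin (k + 2) → α) x z ↔
      a = z ∧ (StrictMono f ∧ f 0 = x) ∧ f (Fin.last k) < a := by
  rw [IsChainFrom, strictMono_snoc_iff, ← Fin.castSucc_zero, Fin.snoc_castSucc, Fin.snoc_last]
  tauto

end Snoc

section ChainSum

variable [PartialOrder α] [Fintype α] (ρ : α → ℕ) (ζ : α → α → ℚ)

def chainSum (k : ℕ) (x z : α) : QA :=
  ∑ f : Fin (k + 1) → α, if IsChainFrom f x z then chainZeta ζ f • chainWt ρ f else 0

lemma abIndex_eq_sum_chainSum (x z : α) :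
    abIndex ρ ζ x z = ∑ k ∈ range (Fintype.card α), chainSum ρ ζ k x z := rfl

variable {ρ ζ}

lemma chainSum_eq_zero {k : ℕ} {x z : α} (h : ∀ f : Fin (k + 1) → α, ¬ IsChainFrom f x z) :
    chainSum ρ ζ k x z = 0 :=
  sum_eq_zero fun f _ => if_neg (h f)

lemma chainSum_eq_zero_of_card_le {k : ℕ} (hk : Fintype.card α ≤ k) (x z : α) :
    chainSum ρ ζ k x z = 0 :=
  chainSum_eq_zero fun f hf => by
    simpa using (Fintype.card_le_of_injective f hf.1.injective).trans hk

lemma chainSum_eq_zero_of_not_le {k : ℕ} {x z : α} (hxz : ¬ x ≤ z) :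
    chainSum ρ ζ k x z = 0 :=
  chainSum_eq_zero fun _ ⟨hf, h0, hlast⟩ => hxz (h0 ▸ hlast ▸ hf.monotone (Fin.zero_le _))

lemma chainSum_succ_self (k : ℕ) (x : α) : chainSum ρ ζ (k + 1) x x = 0 :=
  chainSum_eq_zero fun _ ⟨hf, h0, hlast⟩ =>
    (h0.trans hlast.symm).not_lt (hf (Fin.last_pos' (n := k + 1)))

lemma chainSum_zero (x z : α) : chainSum ρ ζ 0 x z = if x = z then 1 else 0 := by
  rw [chainSum, ← (Equiv.funUnique (Fin 1) α).symm.sum_comp]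
  split_ifs with h
  · subst h
    simp [IsChainFrom, chainZeta, chainWt, Subsingleton.strictMono]
  · simp [IsChainFrom, chainZeta, chainWt, Subsingleton.strictMono, h]

lemma chainSum_succ (k : ℕ) (x z : α) :
    chainSum ρ ζ (k + 1) x z = ∑ y ∈ univ.filter (· < z), chainSum ρ ζ k x y *
      ((if k = 0 then 1 else bv) * (ζ y z • (av - bv) ^ (ρ z - ρ y - 1))) := by
  rw [chainSum, ← (Fin.snocEquiv fun _ => α).sum_comp, Fintype.sum_prod_type, sum_comm]
  simp only [chainSum, sum_mul]
  conv_rhs => rw [sum_comm]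
  refine sum_congr rfl fun f _ => ?_
  simp only [show ∀ p : α × (Fin (k + 1) → α), Fin.snocEquiv (fun _ => α) p = Fin.snoc p.2 p.1
    from fun _ => rfl, isChainFrom_snoc_iff, chainZeta_snoc, chainWt_snoc]
  by_cases hf : StrictMono f ∧ f 0 = x
  · have hchain (y : α) : IsChainFrom f x y ↔ f (Fin.last k) = y := by
      simp [IsChainFrom, hf]
    simp only [hf, hchain, true_and, ite_and, sum_ite_eq', mem_univ, if_true, ite_zero_mul,
      sum_ite_eq, mem_filter]
    rw [smul_mul_assoc, mul_smul_comm, mul_smul_comm, smul_smul]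
  · have hchain (y : α) : ¬ IsChainFrom f x y := fun h => hf ⟨h.1, h.2.1⟩
    simp only [hf, hchain, false_and, and_false, if_false, zero_mul, sum_const_zero]

lemma abIndex_eq_sum_range {N : ℕ} (hN : Fintype.card α ≤ N) (x z : α) :
    abIndex ρ ζ x z = ∑ k ∈ range N, chainSum ρ ζ k x z :=
  sum_subset (range_subset_range.mpr hN) fun k _ hk =>
    chainSum_eq_zero_of_card_le (by simpa using hk) x z

lemma sum_chainSum_self_mul (x : α) (c : ℕ → QA) :
    ∑ k ∈ range (Fintype.card α), chainSum ρ ζ k x x * c k = c 0 := by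
  rw [sum_eq_single_of_mem 0 (mem_range.mpr (Fintype.card_pos_iff.mpr ⟨x⟩))]
  · simp [chainSum_zero]
  · rintro (_ | k) _ hk
    · exact absurd rfl hk
    · rw [chainSum_succ_self, zero_mul]

lemma sum_chainSum_mul_of_ne {x y : α} (hxy : x ≠ y) (c : QA) :
    ∑ k ∈ range (Fintype.card α), chainSum ρ ζ k x y * ((if k = 0 then 1 else bv) * c) =
      abIndex ρ ζ x y * bv * c := by
  rw [abIndex_eq_sum_chainSum, mul_assoc, sum_mul]
  refine sum_congr rfl fun k _ => ?_
  rcases k with _ | k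
  · simp [chainSum_zero, hxy]
  · simp

end ChainSum

theorem abIndex_recursion_general {α : Type*} [Fintype α] [PartialOrder α]
    (ρ : α → ℕ) (ζ : α → α → ℚ)
    (x z : α) (hxz : x < z) :
    abIndex ρ ζ x z =
      ζ x z • (av - bv) ^ (ρ z - ρ x - 1)
        + ∑ y ∈ Finset.univ.filter (fun y => x < y ∧ y < z),
            abIndex ρ ζ x y * bv * (ζ y z • (av - bv) ^ (ρ z - ρ y - 1)) := by
  -- With `card α + 1` chain lengths, dropping the top element leaves exactly those of `abIndex`.
  rw [abIndex_eq_sum_range (Nat.le_succ _), sum_range_succ', chainSum_zero, if_neg hxz.ne,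
    add_zero]
  simp_rw [chainSum_succ]
  rw [sum_comm, sum_filter_lt_eq_add_sum_Ioo hxz _ fun y hxy =>
    sum_eq_zero fun k _ => by rw [chainSum_eq_zero_of_not_le hxy, zero_mul]]
  rw [sum_chainSum_self_mul, if_pos rfl, one_mul]
  congr 1
  exact sum_congr rfl fun y hy => sum_chainSum_mul_of_ne (mem_filter.mp hy).2.1.ne _

/-- the recursion for the ab-index:
`Ψ([x,z]) = ζ̄(x,z)(a-b)^{ρ(x,z)-1} + ∑_{x<y<z} Ψ([x,y])·b·ζ̄(y,z)(a-b)^{ρ(y,z)-1}`. -/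
theorem abIndex_recursion {α : Type*} [Fintype α] [PartialOrder α] [BoundedOrder α]
    (ρ : α → ℕ) (ζ : α → α → ℚ) (hq : IsQuasiGraded ρ ζ)
    (x z : α) (hxz : x < z) :
    abIndex ρ ζ x z =
      ζ x z • (av - bv) ^ (ρ z - ρ x - 1)
        + ∑ y ∈ Finset.univ.filter (fun y => x < y ∧ y < z),
            abIndex ρ ζ x y * bv * (ζ y z • (av - bv) ^ (ρ z - ρ y - 1)) :=
  abIndex_recursion_general ρ ζ x z hxz
end
end

section
/- If (P,ρ_P,ζ̄_P) and (Q,ρ_Q,ζ̄_Q) are Eulerian quasi-graded posets, then their Cartesian product (P × Q, ρ, ζ̄), where ρ((x,y)) = ρ_P(x) + ρ_Q(y) and ζ̄((x,y),(z,w)) = ζ̄_P(x,z)·ζ̄_Q(y,w), is an Eulerian quasi-graded poset. -/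
open scoped Classical
open Finset

noncomputable section

variable {α : Type*}

/- The interval `[(x,y),(z,w)]` of `P × Q` is `[x,z] × [y,w]`, and rank, sign and `ζ̄` all split
over the two coordinates, so the Eulerian sum of the product is the product of the two
Eulerian sums, just as `δ` of the product is the product of the two `δ`s. -/

section Prod

variable {β : Type*}

theorem iaDelta_prod (p q : α × β) : iaDelta p q = iaDelta p.1 q.1 * iaDelta p.2 q.2 := by
  simp only [iaDelta, Prod.ext_iff, ite_zero_mul_ite_zero, mul_one]

variable [PartialOrder α] [PartialOrder β]

theorem IsQuasiGraded.prod {ρP : α → ℕ} {ζP : α → α → ℚ} {ρQ : β → ℕ} {ζQ : β → β → ℚ}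
    (hP : IsQuasiGraded ρP ζP) (hQ : IsQuasiGraded ρQ ζQ) :
    IsQuasiGraded (fun p : α × β => ρP p.1 + ρQ p.2)
      (fun p q : α × β => ζP p.1 q.1 * ζQ p.2 q.2) := by
  obtain ⟨hρP, hζP_diag, hζP_zero⟩ := hP
  obtain ⟨hρQ, hζQ_diag, hζQ_zero⟩ := hQ
  refine ⟨fun p q hpq => ?_, fun p => by simp only [hζP_diag, hζQ_diag, mul_one],
    fun p q hpq => ?_⟩
  · rcases Prod.lt_iff.mp hpq with ⟨h₁, h₂⟩ | ⟨h₁, h₂⟩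
    · exact add_lt_add_of_lt_of_le (hρP h₁) (hρQ.monotone h₂)
    · exact add_lt_add_of_le_of_lt (hρP.monotone h₁) (hρQ h₂)
  · rcases not_and_or.mp (Prod.le_def.not.mp hpq) with h | h
    · simp only [hζP_zero _ _ h, zero_mul]
    · simp only [hζQ_zero _ _ h, mul_zero]

variable [Fintype α] [Fintype β]

-- Arbitrary decidability instances, so that it rewrites the classical ones inside `EulerianAt`.
theorem filter_le_and_le_prod (p q : α × β) [DecidablePred fun y : α × β => p ≤ y ∧ y ≤ q]
    [DecidablePred fun y : α => p.1 ≤ y ∧ y ≤ q.1] [DecidablePred fun y : β => p.2 ≤ y ∧ y ≤ q.2] :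
    univ.filter (fun y => p ≤ y ∧ y ≤ q) =
      univ.filter (fun y => p.1 ≤ y ∧ y ≤ q.1) ×ˢ univ.filter (fun y => p.2 ≤ y ∧ y ≤ q.2) := by
  ext y
  simp only [mem_filter, mem_univ, true_and, mem_product, Prod.le_def]
  tauto

theorem EulerianAt.prod {ρP : α → ℕ} {ζP : α → α → ℚ} {ρQ : β → ℕ} {ζQ : β → β → ℚ}
    (hρP : Monotone ρP) (hρQ : Monotone ρQ) {p q : α × β}
    (hP : EulerianAt ρP ζP p.1 q.1) (hQ : EulerianAt ρQ ζQ p.2 q.2) :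
    EulerianAt (fun p : α × β => ρP p.1 + ρQ p.2)
      (fun p q : α × β => ζP p.1 q.1 * ζQ p.2 q.2) p q := by
  unfold EulerianAt at hP hQ ⊢
  rw [filter_le_and_le_prod, sum_product, iaDelta_prod, ← hP, ← hQ, sum_mul_sum]
  refine sum_congr rfl fun y₁ hy₁ => sum_congr rfl fun y₂ hy₂ => ?_
  have hle₁ : ρP p.1 ≤ ρP y₁ := hρP (mem_filter.mp hy₁).2.1
  have hle₂ : ρQ p.2 ≤ ρQ y₂ := hρQ (mem_filter.mp hy₂).2.1
  have hsign : ρP y₁ + ρQ y₂ - (ρP p.1 + ρQ p.2) = (ρP y₁ - ρP p.1) + (ρQ y₂ - ρQ p.2) := by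
    omega
  rw [hsign, pow_add]
  ring

end Prod

/-- the Cartesian product of two Eulerian quasi-graded posets is an
Eulerian quasi-graded poset. -/
theorem cartesian_product_eulerian {α β : Type*} [Fintype α] [Fintype β]
    [PartialOrder α] [PartialOrder β]
    (ρP : α → ℕ) (ζP : α → α → ℚ) (ρQ : β → ℕ) (ζQ : β → β → ℚ)
    (hqP : IsQuasiGraded ρP ζP) (hqQ : IsQuasiGraded ρQ ζQ)
    (hEP : IsEulerian ρP ζP) (hEQ : IsEulerian ρQ ζQ) :
    IsQuasiGraded (fun p : α × β => ρP p.1 + ρQ p.2)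
        (fun p q : α × β => ζP p.1 q.1 * ζQ p.2 q.2) ∧
      IsEulerian (fun p : α × β => ρP p.1 + ρQ p.2)
        (fun p q : α × β => ζP p.1 q.1 * ζQ p.2 q.2) :=
  ⟨hqP.prod hqQ, fun _ _ hpq =>
    (hEP _ _ hpq.1).prod hqP.1.monotone hqQ.1.monotone (hEQ _ _ hpq.2)⟩
end
end

section
/- Zipping preserves the Eulerian property: if (P,ρ,ζ̄) is an Eulerian quasi-graded poset with 0̂ and 1̂ containing a zipper x, y, z, then the zipped quasi-graded poset (Q,ρ_Q,ζ̄_Q) is also Eulerian. -/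
open scoped Classical
open Finset

noncomputable section

variable {α : Type*}

/-!
Entry `(u,v)` of `ζ̄_Q` is `g_v(r u)`, where `r w = x` and `r u = u` otherwise (`zipRep`), and
`g_w = ζ̄(·,x) + ζ̄(·,y) - ζ̄(·,z)`, `g_v = ζ̄(·,v)` otherwise (`zipCol`). The Eulerian sum of `Q`
at `(u,v)` is therefore the Eulerian sum of `P` of row `r u` against `g_v`, which is `δ_{u,v}` by
linearity, except that the three terms at `x`, `y`, `z` are replaced by a single term at `w`.
These agree because `g_v` takes the same value at `x`, `y`, `z` (this is where the zipper axioms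
enter) while the sign at `z` is opposite to the common sign at `x` and `y`.
-/

section QuasiGraded

variable {α : Type*} [PartialOrder α] {ρ : α → ℕ} {ζ : α → α → ℚ}

theorem IsQuasiGraded.le_of_zeta_ne_zero (hq : IsQuasiGraded ρ ζ) {a b : α} (h : ζ a b ≠ 0) :
    a ≤ b :=
  not_imp_comm.1 (hq.2.2 a b) h

theorem IsQuasiGraded.zeta_eq_zero_of_rank_le (hq : IsQuasiGraded ρ ζ) {a b : α} (hab : a ≠ b)
    (h : ρ b ≤ ρ a) : ζ a b = 0 :=
  hq.2.2 a b fun hle => (hq.1 (lt_of_le_of_ne hle hab)).not_ge h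

theorem IsEulerian.sum_univ_eq_ite [Fintype α] (hζ : ∀ a b : α, ¬ a ≤ b → ζ a b = 0)
    (hE : IsEulerian ρ ζ) (u v : α) :
    ∑ a, (-1 : ℚ) ^ (ρ a - ρ u) * ζ u a * ζ a v = if u = v then 1 else 0 := by
  by_cases huv : u ≤ v
  · have h := hE u v huv
    unfold EulerianAt iaDelta at h
    rw [← h, eq_comm]
    refine Finset.sum_filter_of_ne fun a _ h => ⟨?_, ?_⟩
    · exact by_contra fun hua => h (by rw [hζ u a hua]; ring)
    · exact by_contra fun hav => h (by rw [hζ a v hav]; ring)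
  · rw [if_neg (by rintro rfl; exact huv le_rfl)]
    refine Finset.sum_eq_zero fun a _ => ?_
    by_cases hua : u ≤ a
    · rw [hζ a v fun hav => huv (hua.trans hav), mul_zero]
    · rw [hζ u a hua, mul_zero, zero_mul]

end QuasiGraded

section Zipper

variable {α : Type*} {ρ : α → ℕ} {ζ : α → α → ℚ} {x y z : α}

structure IsZipper [PartialOrder α] (ρ : α → ℕ) (ζ : α → α → ℚ) (x y z : α) : Prop where
  ne : x ≠ y
  rank_left_eq_rank_right : ρ x = ρ y
  rank_left_eq_succ : ρ x = ρ z + 1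
  covBy_left : z ⋖ x
  covBy_right : z ⋖ y
  eq_of_covBy : ∀ v, z ⋖ v → v = x ∨ v = y
  zeta_eq_of_rank_lt : ∀ v, z < v → ρ x < ρ v → ζ x v = ζ z v ∧ ζ y v = ζ z v
  zeta_bot_left : ζ z x = 1
  zeta_bot_right : ζ z y = 1

def zipRep (x z a : α) : α := if a = z then x else a

def zipCol (ζ : α → α → ℚ) (x y z v b : α) : ℚ :=
  if v = z then ζ b x + ζ b y - ζ b z else ζ b v

theorem zipRank_eq_rank_zipRep [PartialOrder α] (u : ZipCarrier α x y) :
    zipRank ρ x y z u = ρ (zipRep x z u.1) := by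
  unfold zipRank zipRep
  split_ifs <;> rfl

theorem sum_zipCarrier [Fintype α] (hzx : z ≠ x) (hzy : z ≠ y) (f : α → ℚ) :
    ∑ a : ZipCarrier α x y, f a.1 = f z + ∑ a ∈ ({x, y, z}ᶜ : Finset α), f a := by
  rw [← Finset.sum_subtype ({x, y}ᶜ : Finset α) (by simp) f,
    ← Finset.add_sum_erase _ f (by simp [hzx, hzy] : z ∈ ({x, y}ᶜ : Finset α))]
  congr 2
  ext a
  simp only [Finset.mem_erase, Finset.mem_compl, Finset.mem_insert, Finset.mem_singleton]
  tauto

variable [PartialOrder α]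

theorem sum_neg_one_pow_mul_zipCol [Fintype α] (hζ : ∀ a b : α, ¬ a ≤ b → ζ a b = 0)
    (hE : IsEulerian ρ ζ) (b v : α) :
    ∑ a, (-1 : ℚ) ^ (ρ a - ρ b) * ζ b a * zipCol ζ x y z v a =
      if v = z then (if b = x then 1 else 0) + (if b = y then 1 else 0) - (if b = z then 1 else 0)
      else if b = v then 1 else 0 := by
  unfold zipCol
  by_cases hv : v = z
  · simp only [hv, if_true, mul_add, mul_sub, Finset.sum_add_distrib, Finset.sum_sub_distrib,
      hE.sum_univ_eq_ite hζ]
  · simp only [hv, if_false, hE.sum_univ_eq_ite hζ]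

namespace IsZipper

theorem rank_left_lt_of_lt (hZ : IsZipper ρ ζ x y z) (hq : IsQuasiGraded ρ ζ) {v : α}
    (hvx : v ≠ x) (hvy : v ≠ y) (hzv : z < v) : ρ x < ρ v := by
  obtain ⟨m, hzm, hmv⟩ := (not_covBy_iff hzv).1 fun h => (hZ.eq_of_covBy v h).elim hvx hvy
  have := hq.1 hzm
  have := hq.1 hmv
  have := hZ.rank_left_eq_succ
  omega

theorem zeta_eq_zeta_left (hZ : IsZipper ρ ζ x y z) (hq : IsQuasiGraded ρ ζ) {v : α}
    (hvx : v ≠ x) (hvy : v ≠ y) (hvz : v ≠ z) : ζ y v = ζ x v ∧ ζ z v = ζ x v := by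
  by_cases hzv : z < v
  · obtain ⟨hx, hy⟩ := hZ.zeta_eq_of_rank_lt v hzv (hZ.rank_left_lt_of_lt hq hvx hvy hzv)
    exact ⟨hy.trans hx.symm, hx.symm⟩
  · have hvanish : ∀ a, z ≤ a → ζ a v = 0 := fun a hza =>
      hq.2.2 a v fun hav => hzv (lt_of_le_of_ne (hza.trans hav) hvz.symm)
    rw [hvanish x hZ.covBy_left.le, hvanish y hZ.covBy_right.le, hvanish z le_rfl]
    exact ⟨rfl, rfl⟩

theorem zipCol_eq_zipCol_left (hZ : IsZipper ρ ζ x y z) (hq : IsQuasiGraded ρ ζ) {v : α}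
    (hvx : v ≠ x) (hvy : v ≠ y) :
    zipCol ζ x y z v y = zipCol ζ x y z v x ∧ zipCol ζ x y z v z = zipCol ζ x y z v x := by
  unfold zipCol
  split_ifs with hvz
  · have hρ := hZ.rank_left_eq_succ
    have hρ' := hZ.rank_left_eq_rank_right
    rw [hq.zeta_eq_zero_of_rank_le hZ.ne hZ.rank_left_eq_rank_right.ge,
      hq.zeta_eq_zero_of_rank_le hZ.ne.symm hZ.rank_left_eq_rank_right.le,
      hq.zeta_eq_zero_of_rank_le hZ.covBy_left.lt.ne' (by omega),
      hq.zeta_eq_zero_of_rank_le hZ.covBy_right.lt.ne' (by omega),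
      hq.2.1, hq.2.1, hq.2.1, hZ.zeta_bot_left, hZ.zeta_bot_right]
    norm_num
  · exact hZ.zeta_eq_zeta_left hq hvx hvy hvz

theorem neg_one_pow_mul_zeta_bot (hZ : IsZipper ρ ζ x y z) (hq : IsQuasiGraded ρ ζ) (b : α) :
    (-1 : ℚ) ^ (ρ z - ρ b) * ζ b z = -((-1) ^ (ρ x - ρ b) * ζ b z) := by
  rcases eq_or_ne (ζ b z) 0 with h | h
  · simp [h]
  · have := hq.1.monotone (hq.le_of_zeta_ne_zero h)
    have := hZ.rank_left_eq_succ
    rw [show ρ x - ρ b = ρ z - ρ b + 1 by omega, pow_succ]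
    ring

theorem sum_zipCarrier_eq_sum (hZ : IsZipper ρ ζ x y z) (hq : IsQuasiGraded ρ ζ) [Fintype α]
    (b : α) (g : α → ℚ) (hgy : g y = g x) (hgz : g z = g x) :
    ∑ a : ZipCarrier α x y,
        (-1 : ℚ) ^ (ρ (zipRep x z a.1) - ρ b) * zipCol ζ x y z a.1 b * g (zipRep x z a.1) =
      ∑ a, (-1 : ℚ) ^ (ρ a - ρ b) * ζ b a * g a := by
  have hzx := hZ.covBy_left.lt.ne
  have hzy := hZ.covBy_right.lt.ne
  rw [sum_zipCarrier hzx hzy fun a =>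
      (-1 : ℚ) ^ (ρ (zipRep x z a) - ρ b) * zipCol ζ x y z a b * g (zipRep x z a),
    ← Finset.sum_add_sum_compl {x, y, z},
    Finset.sum_insert (by simp [hZ.ne, hzx.symm]), Finset.sum_pair hzy.symm]
  have hrest : ∀ a ∈ ({x, y, z}ᶜ : Finset α),
      (-1 : ℚ) ^ (ρ (zipRep x z a) - ρ b) * zipCol ζ x y z a b * g (zipRep x z a) =
        (-1 : ℚ) ^ (ρ a - ρ b) * ζ b a * g a := fun a ha => by
    have haz : a ≠ z := by simp_all
    simp only [zipRep, zipCol, if_neg haz]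
  rw [Finset.sum_congr rfl hrest]
  simp only [zipRep, zipCol, if_true]
  rw [hgy, hgz, ← hZ.rank_left_eq_rank_right]
  linear_combination (-g x) * hZ.neg_one_pow_mul_zeta_bot hq b

theorem sum_zipRep_mul_zipCol (hZ : IsZipper ρ ζ x y z) (hq : IsQuasiGraded ρ ζ) [Fintype α]
    (hE : IsEulerian ρ ζ) (u v : ZipCarrier α x y) :
    ∑ a, (-1 : ℚ) ^ (ρ a - ρ (zipRep x z u.1)) * ζ (zipRep x z u.1) a * zipCol ζ x y z v.1 a =
      if u = v then 1 else 0 := by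
  have hzx := hZ.covBy_left.lt.ne
  have hzy := hZ.covBy_right.lt.ne
  obtain ⟨u, hux, huy⟩ := u
  obtain ⟨v, hvx, hvy⟩ := v
  rw [sum_neg_one_pow_mul_zipCol hq.2.2 hE]
  simp only [zipRep, Subtype.mk.injEq]
  by_cases hu : u = z <;> by_cases hv : v = z
  · simp [hu, hv, hZ.ne, hzx.symm]
  · simp [hu, hv, hvx.symm, Ne.symm hv]
  · simp [hu, hv, hux, huy]
  · simp [hu, hv]

theorem zipZeta_eq_zipCol_zipRep (hZ : IsZipper ρ ζ x y z) (hq : IsQuasiGraded ρ ζ)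
    (u v : ZipCarrier α x y) : zipZeta ζ x y z u v = zipCol ζ x y z v.1 (zipRep x z u.1) := by
  have hρ := hZ.rank_left_eq_succ
  unfold zipZeta zipCol zipRep
  split_ifs <;>
    simp_all [hq.zeta_eq_zero_of_rank_le hZ.ne hZ.rank_left_eq_rank_right.ge,
      hq.zeta_eq_zero_of_rank_le hZ.covBy_left.lt.ne' (by omega), hq.2.1]

end IsZipper

theorem zipLe_of_zipZeta_ne_zero (hq : IsQuasiGraded ρ ζ) (hzx : z < x)
    {u v : ZipCarrier α x y} (h : zipZeta ζ x y z u v ≠ 0) : zipLe x y z u v := by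
  obtain ⟨u, hux, huy⟩ := u
  obtain ⟨v, hvx, hvy⟩ := v
  unfold zipZeta at h
  unfold zipLe zipLt
  simp only [Subtype.mk.injEq] at h ⊢
  by_cases hu : u = z <;> by_cases hv : v = z <;> simp only [hu, hv, if_true, if_false] at h ⊢
  · exact Or.inr trivial
  · exact Or.inl ⟨hv, lt_of_le_of_ne (hq.le_of_zeta_ne_zero h) (Ne.symm hvx)⟩
  · refine Or.inl (by_contra fun hlt => h ?_)
    push Not at hlt
    have hux' : ¬ u ≤ x := fun hle => hlt.1 (lt_of_le_of_ne hle hux)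
    rw [hq.2.2 u x hux', hq.2.2 u y fun hle => hlt.2 (lt_of_le_of_ne hle huy),
      hq.2.2 u z fun hle => hux' (hle.trans hzx.le), sub_zero, add_zero]
  · exact (hq.le_of_zeta_ne_zero h).lt_or_eq.imp id id

end Zipper

theorem zipping_preserves_eulerian_general {α : Type*} [Fintype α] [PartialOrder α]
    (ρ : α → ℕ) (ζ : α → α → ℚ)
    (hq : IsQuasiGraded ρ ζ) (hE : IsEulerian ρ ζ)
    (x y z : α) (hxy : x ≠ y)
    (hrxy : ρ x = ρ y) (hrz : ρ x = ρ z + 1)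
    (hzx : z ⋖ x) (hzy : z ⋖ y) (hcov : ∀ v : α, z ⋖ v → v = x ∨ v = y)
    (hzeta : ∀ v : α, z < v → ρ x < ρ v → ζ x v = ζ z v ∧ ζ y v = ζ z v)
    (h1x : ζ z x = 1) (h1y : ζ z y = 1) :
    IsEulerianRel (zipLe x y z) (zipRank ρ x y z) (zipZeta ζ x y z) := by
  have hZ : IsZipper ρ ζ x y z := ⟨hxy, hrxy, hrz, hzx, hzy, hcov, hzeta, h1x, h1y⟩
  intro u v _
  rw [Finset.sum_filter_of_ne fun a _ h =>
    ⟨zipLe_of_zipZeta_ne_zero hq hzx.lt (right_ne_zero_of_mul (left_ne_zero_of_mul h)),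
      zipLe_of_zipZeta_ne_zero hq hzx.lt (right_ne_zero_of_mul h)⟩]
  simp only [hZ.zipZeta_eq_zipCol_zipRep hq, zipRank_eq_rank_zipRep]
  obtain ⟨hgy, hgz⟩ := hZ.zipCol_eq_zipCol_left hq v.2.1 v.2.2
  rw [hZ.sum_zipCarrier_eq_sum hq _ _ hgy hgz, hZ.sum_zipRep_mul_zipCol hq hE]
  -- the two sides differ only in their `Decidable (u = v)` instance
  congr

/-- zipping preserves the Eulerian property. -/
theorem zipping_preserves_eulerian {α : Type*} [Fintype α] [PartialOrder α]
    [BoundedOrder α] (ρ : α → ℕ) (ζ : α → α → ℚ)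
    (hq : IsQuasiGraded ρ ζ) (hE : IsEulerian ρ ζ)
    (x y z : α) (hxy : x ≠ y)
    (hrxy : ρ x = ρ y) (hrz : ρ x = ρ z + 1)
    (hzx : z ⋖ x) (hzy : z ⋖ y) (hcov : ∀ v : α, z ⋖ v → v = x ∨ v = y)
    (hzeta : ∀ v : α, z < v → ρ x < ρ v → ζ x v = ζ z v ∧ ζ y v = ζ z v)
    (h1x : ζ z x = 1) (h1y : ζ z y = 1) :
    IsEulerianRel (zipLe x y z) (zipRank ρ x y z) (zipZeta ζ x y z) :=
  zipping_preserves_eulerian_general ρ ζ hq hE x y z hxy hrxy hrz hzx hzy hcov hzeta h1x h1y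
end
end
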